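/- Recursive generation of triples for P₀: for all natural numbers p, q with 1 ≤ p, 1 ≤ q, p ≠ q, if ω₀(p, q) = 1 and r = p ^^^ q, then ω₀(2r, 2q) = 1, ω₀(2p, 2q+1) = 1, ω₀(2p+1, 2q) = 1 and ω₀(2p+1, 2q+1) = 1; that is, the triple (p,q,r) generates the triples (2r,2q,2p), (2p,2q+1,2r+1), (2p+1,2q,2r+1) and (2p+1,2q+1,2r). -/

import Mathlib

/-- Twist of the Cayley–Dickson doubling product `P₀ : (a,b)(c,d) = (ca − b*d, da* + bc)`. -/
def omega0 (p q : ℕ) : ℤ :=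
  if p = 0 ∧ q = 0 then 1
  else if p % 2 = 0 then
    if q % 2 = 0 then omega0 (q / 2) (p / 2)
    else if 0 < p / 2 then -omega0 (q / 2) (p / 2) else 1
  else
    if q % 2 = 0 then omega0 (p / 2) (q / 2)
    else if 0 < p / 2 then omega0 (p / 2) (q / 2) else -1
termination_by p + q
decreasing_by all_goals omega

/-!
The four parity recursions of `omega0` give, by induction on `p + q`, three structural facts
for nonzero indices: `ω₀(p, p) = -1`, antisymmetry `ω₀(q, p) = -ω₀(p, q)` for `p ≠ q`, and
invariance under rotating the triple `(p, q, p ^^^ q)`, i.e. `ω₀(q, p ^^^ q) = ω₀(p, q)`.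
Each of the four generated triples is then one recursion step away from `(p, q, r)`:
`ω₀(2r, 2q) = ω₀(q, r)` is handled by rotation, `ω₀(2p, 2q + 1) = -ω₀(q, p)` by antisymmetry,
and the two odd cases reduce to `ω₀(p, q)` directly.
-/

theorem Nat.two_mul_xor_two_mul (a b : ℕ) : 2 * a ^^^ 2 * b = 2 * (a ^^^ b) := by
  simpa [Nat.bit] using Nat.xor_bit false a false b

theorem Nat.two_mul_xor_two_mul_add_one (a b : ℕ) :
    2 * a ^^^ (2 * b + 1) = 2 * (a ^^^ b) + 1 := by
  simpa [Nat.bit] using Nat.xor_bit false a true b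

theorem Nat.two_mul_add_one_xor_two_mul (a b : ℕ) :
    (2 * a + 1) ^^^ 2 * b = 2 * (a ^^^ b) + 1 := by
  simpa [Nat.bit] using Nat.xor_bit true a false b

theorem Nat.two_mul_add_one_xor_two_mul_add_one (a b : ℕ) :
    (2 * a + 1) ^^^ (2 * b + 1) = 2 * (a ^^^ b) := by
  simpa [Nat.bit] using Nat.xor_bit true a true b

theorem omega0_even_even (a b : ℕ) : omega0 (2 * a) (2 * b) = omega0 b a := by
  rcases eq_or_ne a 0 with rfl | ha
  · rcases eq_or_ne b 0 with rfl | hb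
    · rfl
    · rw [omega0]; simp [hb]
  · rw [omega0]; simp [ha]

theorem omega0_even_odd {a : ℕ} (ha : 0 < a) (b : ℕ) :
    omega0 (2 * a) (2 * b + 1) = -omega0 b a := by
  rw [omega0]; simp [Nat.mul_add_div, ha]

theorem omega0_zero_odd (b : ℕ) : omega0 0 (2 * b + 1) = 1 := by
  rw [omega0]; simp

theorem omega0_odd_even (a b : ℕ) : omega0 (2 * a + 1) (2 * b) = omega0 a b := by
  rw [omega0]; simp [Nat.mul_add_div]

theorem omega0_odd_odd {a : ℕ} (ha : 0 < a) (b : ℕ) :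
    omega0 (2 * a + 1) (2 * b + 1) = omega0 a b := by
  rw [omega0]; simp [Nat.mul_add_div, ha]

theorem omega0_one_odd (b : ℕ) : omega0 1 (2 * b + 1) = -1 := by
  rw [omega0]; simp

mutual
theorem omega0_zero_right (p : ℕ) : omega0 p 0 = 1 := by
  obtain ⟨a, rfl | rfl⟩ := Nat.even_or_odd' p
  · rcases Nat.eq_zero_or_pos a with rfl | ha
    · simp [omega0]
    · simpa using (omega0_even_even a 0).trans (omega0_zero_left a)
  · simpa using (omega0_odd_even a 0).trans (omega0_zero_right a)
termination_by p
theorem omega0_zero_left (p : ℕ) : omega0 0 p = 1 := by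
  obtain ⟨a, rfl | rfl⟩ := Nat.even_or_odd' p
  · rcases Nat.eq_zero_or_pos a with rfl | ha
    · simp [omega0]
    · simpa using (omega0_even_even 0 a).trans (omega0_zero_right a)
  · exact omega0_zero_odd a
termination_by p
end

theorem omega0_self {p : ℕ} (hp : 0 < p) : omega0 p p = -1 := by
  obtain ⟨a, rfl | rfl⟩ := Nat.even_or_odd' p
  · rw [omega0_even_even, omega0_self (by omega : 0 < a)]
  · rcases Nat.eq_zero_or_pos a with rfl | ha
    · exact omega0_one_odd 0
    · rw [omega0_odd_odd ha, omega0_self ha]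

theorem omega0_swap {p q : ℕ} (hp : 0 < p) (hq : 0 < q) (hpq : p ≠ q) :
    omega0 q p = -omega0 p q := by
  obtain ⟨a, rfl | rfl⟩ := Nat.even_or_odd' p <;> obtain ⟨b, rfl | rfl⟩ := Nat.even_or_odd' q
  · rw [omega0_even_even, omega0_even_even, omega0_swap (p := b) (by omega) (by omega) (by omega)]
  · rw [omega0_even_odd (by omega), omega0_odd_even, neg_neg]
  · rw [omega0_even_odd (by omega), omega0_odd_even]
  · rcases Nat.eq_zero_or_pos a with rfl | ha
    · rw [omega0_odd_odd (by omega), omega0_zero_right, omega0_one_odd, neg_neg]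
    rcases Nat.eq_zero_or_pos b with rfl | hb
    · rw [omega0_odd_odd ha, omega0_zero_right, omega0_one_odd]
    rw [omega0_odd_odd ha, omega0_odd_odd hb, omega0_swap ha hb (by omega)]
termination_by p + q

theorem omega0_rotate {p q : ℕ} (hp : 0 < p) (hq : 0 < q) (hpq : p ≠ q) :
    omega0 q (p ^^^ q) = omega0 p q := by
  obtain ⟨a, rfl | rfl⟩ := Nat.even_or_odd' p <;> obtain ⟨b, rfl | rfl⟩ := Nat.even_or_odd' q
  · have ha : 0 < a := by omega
    have hb : 0 < b := by omega
    have hab : a ≠ b := by omega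
    have hx : 0 < a ^^^ b := Nat.pos_of_ne_zero (by simpa using hab)
    have hbx : b ≠ a ^^^ b := fun h => ha.ne' (by simpa using h.symm)
    rw [Nat.two_mul_xor_two_mul, omega0_even_even, omega0_even_even, omega0_swap hb hx hbx,
      omega0_rotate ha hb hab, omega0_swap ha hb hab]
  · have ha : 0 < a := by omega
    rw [Nat.two_mul_xor_two_mul_add_one, omega0_even_odd ha]
    rcases Nat.eq_zero_or_pos b with rfl | hb
    · rw [Nat.xor_zero, omega0_one_odd, omega0_zero_left]
    rw [omega0_odd_odd hb]
    rcases eq_or_ne a b with rfl | hab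
    · rw [Nat.xor_self, omega0_zero_right, omega0_self hb, neg_neg]
    · rw [omega0_rotate ha hb hab, omega0_swap ha hb hab, neg_neg]
  · have hb : 0 < b := by omega
    rw [Nat.two_mul_add_one_xor_two_mul, omega0_even_odd hb, omega0_odd_even]
    rcases Nat.eq_zero_or_pos a with rfl | ha
    · rw [Nat.zero_xor, omega0_self hb, omega0_zero_left, neg_neg]
    rcases eq_or_ne a b with rfl | hab
    · rw [Nat.xor_self, omega0_zero_left, omega0_self ha]
    have hx : 0 < a ^^^ b := Nat.pos_of_ne_zero (by simpa using hab)
    have hbx : b ≠ a ^^^ b := fun h => ha.ne' (by simpa using h.symm)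
    rw [omega0_swap hb hx hbx, neg_neg, omega0_rotate ha hb hab]
  · have hab : a ≠ b := by omega
    rw [Nat.two_mul_add_one_xor_two_mul_add_one, omega0_odd_even]
    rcases Nat.eq_zero_or_pos a with rfl | ha
    · rw [Nat.zero_xor, omega0_self (by omega), omega0_one_odd]
    rcases Nat.eq_zero_or_pos b with rfl | hb
    · rw [Nat.xor_zero, omega0_zero_left, omega0_odd_odd ha, omega0_zero_right]
    rw [omega0_rotate ha hb hab, omega0_odd_odd ha]
termination_by p + q

/-- Recursive generation of structure-constant triples for the doubling product P0. -/
theorem omega0_triple_generation (p q r : ℕ) (hp : 1 ≤ p) (hq : 1 ≤ q) (hpq : p ≠ q)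
    (h : omega0 p q = 1) (hr : r = p ^^^ q) :
    omega0 (2 * r) (2 * q) = 1 ∧
    omega0 (2 * p) (2 * q + 1) = 1 ∧
    omega0 (2 * p + 1) (2 * q) = 1 ∧
    omega0 (2 * p + 1) (2 * q + 1) = 1 := by
  subst hr
  exact ⟨by rw [omega0_even_even, omega0_rotate hp hq hpq, h],
    by rw [omega0_even_odd hp, omega0_swap hp hq hpq, h, neg_neg],
    by rw [omega0_odd_even, h],
    by rw [omega0_odd_odd hp, h]⟩
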